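/- arXiv:1008.1003 — 7 statements merged into one kernel-verified Lean document; each statement's English description precedes it below -/
import Mathlib

section
/- Suppose k ∈ ℕ is such that N_{k+1} = 0 and N_{k+2} = 0. Then, as polynomials with coefficients in the (noncommutative) matrix ring Matrix V V R, one has (1 − Δ·t + Δᵀ·t² − 1·t³) · (Σ_{j=0}^{k} N_j·t^j) = 1 − N_k·t^{k+3}. Equivalently, the matrix Hilbert series H(t) = Σ_{j=0}^{k} N_j t^j satisfies (1 − Δt + Δᵀt² − t³)·H(t) = 1 − N_k t^{k+3}; this is the computation underlying the formula H_A(t) = (1 − P t^h)/(1 − Δ_G t + Δ_Gᵀ t² − t³) for the Hilbert series of the almost Calabi–Yau algebra of an SU(3) 𝒜𝒟ℰ graph with P = N_k and Coxeter number h = k+3. -/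
open scoped Matrix
open Polynomial

private lemma mhs_step {S : Type*} [Ring S] (d dt n1 n2 nk x y : S)
    (hxn : x * n1 = n1 * x) (hxy : Commute x y) :
    1 - n1 * y + (d * n1 - n2) * (y * x) - nk * (y * x ^ 2)
      + (1 - d * x + dt * x ^ 2 - x ^ 3) * (n1 * y)
    = 1 - n2 * (y * x)
      + (d * n2 - (d * n2 - dt * n1 + nk)) * (y * x ^ 2)
      - n1 * (y * x ^ 3) := by
  have c : Commute x (n1 * y) := (show Commute x n1 from hxn).mul_right hxy
  have e : ∀ n : ℕ, x ^ n * (n1 * y) = n1 * (y * x ^ n) := fun n => by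
    rw [(c.pow_left n).eq, mul_assoc]
  have e1 : x * (n1 * y) = n1 * (y * x) := by
    rw [c.eq, mul_assoc]
  have expand : (1 - d * x + dt * x ^ 2 - x ^ 3) * (n1 * y)
      = n1 * y - d * (n1 * (y * x)) + dt * (n1 * (y * x ^ 2)) - n1 * (y * x ^ 3) := by
    rw [sub_mul, add_mul, sub_mul, one_mul, mul_assoc d, e1, mul_assoc dt, e 2, e 3]
  rw [expand]
  noncomm_ring

private lemma mhs_aux {R : Type*} [CommRing R] {V : Type*} [Fintype V]
    [DecidableEq V] (Δ : Matrix V V R) (N : ℕ → Matrix V V R)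
    (hN0 : N 0 = 1) (hN1 : N 1 = Δ) (hN2 : N 2 = Δ * Δ - Δᵀ)
    (hNrec : ∀ j : ℕ, N (j + 3) = Δ * N (j + 2) - Δᵀ * N (j + 1) + N j)
    (k : ℕ) :
    (1 - C Δ * X + C Δᵀ * X ^ 2 - X ^ 3) *
      (∑ j ∈ Finset.range (k + 1), C (N j) * X ^ j) =
    1 - C (N (k + 1)) * X ^ (k + 1)
      + (C Δ * C (N (k + 1)) - C (N (k + 2))) * X ^ (k + 2)
      - C (N k) * X ^ (k + 3) := by
  induction k with
  | zero =>
      rw [Finset.sum_range_one, hN0, hN1, hN2, map_one, map_sub, map_mul]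
      noncomm_ring
      simp only [add_mul]
      noncomm_ring
  | succ k ih =>
      rw [Finset.sum_range_succ, mul_add, ih, hNrec k, map_add, map_sub, map_mul, map_mul,
        show k + 2 = (k + 1) + 1 from rfl, show k + 3 = (k + 1) + 2 from rfl,
        show k + 1 + 2 = (k + 1) + 2 from rfl, show k + 1 + 3 = (k + 1) + 3 from rfl,
        pow_succ (X : (Matrix V V R)[X]) (k+1), pow_add (X : (Matrix V V R)[X]) (k+1) 2,
        pow_add (X : (Matrix V V R)[X]) (k+1) 3]
      exact mhs_step (C Δ) (C Δᵀ) (C (N (k+1))) (C (N (k+2))) (C (N k)) X (X ^ (k+1))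
        (X_mul_C _) ((Commute.refl X).pow_right (k+1))

/-- **Matrix Hilbert series identity** underlying the formula
`H_A(t) = (1 − P t^h)/(1 − Δ_G t + Δ_Gᵀ t² − t³)` for the Hilbert series of the almost
Calabi–Yau algebra of an SU(3) 𝒜𝒟ℰ graph: if `N : ℕ → Matrix V V R` satisfies `N₀ = 1`,
`N₁ = Δ`, `N₂ = Δ·Δ − Δᵀ`, `N_{j+3} = Δ·N_{j+2} − Δᵀ·N_{j+1} + N_j`, and if
`N_{k+1} = 0 = N_{k+2}`, then as polynomials with coefficients in the (noncommutative)
matrix ring one has `(1 − Δ·t + Δᵀ·t² − 1·t³)·(Σ_{j=0}^{k} N_j·t^j) = 1 − N_k·t^{k+3}`. -/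
theorem matrix_hilbert_series {R : Type*} [CommRing R] {V : Type*} [Fintype V]
    [DecidableEq V] (Δ : Matrix V V R) (N : ℕ → Matrix V V R)
    (hN0 : N 0 = 1) (hN1 : N 1 = Δ) (hN2 : N 2 = Δ * Δ - Δᵀ)
    (hNrec : ∀ j : ℕ, N (j + 3) = Δ * N (j + 2) - Δᵀ * N (j + 1) + N j)
    (k : ℕ) (h1 : N (k + 1) = 0) (h2 : N (k + 2) = 0) :
    (1 - Polynomial.C Δ * Polynomial.X + Polynomial.C Δᵀ * Polynomial.X ^ 2
        - Polynomial.X ^ 3) *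
      (∑ j ∈ Finset.range (k + 1), Polynomial.C (N j) * Polynomial.X ^ j) =
    1 - Polynomial.C (N k) * Polynomial.X ^ (k + 3) := by
  rw [mhs_aux Δ N hN0 hN1 hN2 hNrec k, h1, h2, map_zero]
  simp
end

section
/- The matrix N_k is a permutation matrix: N_k((p,l),(p',l')) = 1 if (p',l') = (k−p−l, p), and N_k((p,l),(p',l')) = 0 otherwise. Moreover the map σ : V_k → V_k, σ(p,l) = (k−p−l, p), is a bijection with σ∘σ∘σ = id and σ ≠ id (so σ has order 3), and σ is an automorphism of the graph 𝒜⁽ⁿ⁾: Δ(σ(v),σ(w)) = Δ(v,w) for all v,w ∈ V_k. (This identifies the permutation P of the Hilbert series theorem for 𝒜⁽ⁿ⁾ as the ℤ₃ rotational symmetry of the graph.) -/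
open scoped Matrix

/-- Vertices of the SU(3) graph `𝒜⁽ⁿ⁾` (with `n = k + 3`): pairs `(p, l)` of naturals
with `p + l ≤ k`, encoded inside `Fin (k+1) × Fin (k+1)`. -/
abbrev GraphAVertex (k : ℕ) : Type :=
  {v : Fin (k + 1) × Fin (k + 1) // (v.1 : ℕ) + (v.2 : ℕ) ≤ k}

/-- Adjacency matrix `Δ` of the graph `𝒜⁽ⁿ⁾`: there is an edge `(p,l) → (p',l')` iff
`(p',l')` is `(p+1,l)`, `(p−1,l+1)` (requiring `p ≥ 1`) or `(p,l−1)` (requiring `l ≥ 1`). -/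
def graphAAdj (k : ℕ) : Matrix (GraphAVertex k) (GraphAVertex k) ℤ := fun v w =>
  if ((w.1.1 : ℕ) = (v.1.1 : ℕ) + 1 ∧ (w.1.2 : ℕ) = (v.1.2 : ℕ))
      ∨ (1 ≤ (v.1.1 : ℕ) ∧ (w.1.1 : ℕ) + 1 = (v.1.1 : ℕ) ∧ (w.1.2 : ℕ) = (v.1.2 : ℕ) + 1)
      ∨ (1 ≤ (v.1.2 : ℕ) ∧ (w.1.1 : ℕ) = (v.1.1 : ℕ) ∧ (w.1.2 : ℕ) + 1 = (v.1.2 : ℕ))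
  then 1 else 0

/-- The recursively defined fusion (nimrep) matrices `N_j` of the graph `𝒜⁽ⁿ⁾`:
`N₀ = 1`, `N₁ = Δ`, `N₂ = Δ·Δ − Δᵀ`, `N_{j+3} = Δ·N_{j+2} − Δᵀ·N_{j+1} + N_j`. -/
def graphAFusion (k : ℕ) : ℕ → Matrix (GraphAVertex k) (GraphAVertex k) ℤ
  | 0 => 1
  | 1 => graphAAdj k
  | 2 => graphAAdj k * graphAAdj k - (graphAAdj k)ᵀ
  | j + 3 =>
      graphAAdj k * graphAFusion k (j + 2) - (graphAAdj k)ᵀ * graphAFusion k (j + 1)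
        + graphAFusion k j

/-- The `ℤ₃` symmetry `σ(p,l) = (k − p − l, p)` of the graph `𝒜⁽ⁿ⁾`. -/
def graphASigma (k : ℕ) (v : GraphAVertex k) : GraphAVertex k :=
  ⟨(⟨k - (v.1.1 : ℕ) - (v.1.2 : ℕ), by omega⟩,
    ⟨(v.1.1 : ℕ), by have h := v.2; omega⟩),
    by
      have h := v.2
      show k - (v.1.1 : ℕ) - (v.1.2 : ℕ) + (v.1.1 : ℕ) ≤ k
      omega⟩


/-!
`N_k` and the permutation matrix `P` of `σ` both lie in the commutant of `{Δ, Δᵀ}`: the `N_j` are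
polynomials in `Δ` and `Δᵀ`, which commute, and `σ` is a graph automorphism. A matrix `M` in this
commutant is determined by its column at the origin, because `MΔᵀ = ΔᵀM` and `MΔ = ΔM` express the
column at a vertex through columns at vertices closer to the origin. Finally the recursion gives
`N_j e₍₀,₀₎ = e₍₀,ⱼ₎` for `j ≤ k`, and `σ(0,k) = (0,0)`, so `N_k` and `P` have the same column at
the origin.
-/

theorem Function.extend_comp_eq_indicator {α β γ : Type*} [Zero γ] (f : α → β) (g : β → γ) :
    Function.extend f (g ∘ f) 0 = (Set.range f).indicator g := by
  classical
  ext b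
  by_cases hb : ∃ a, f a = b
  · obtain ⟨a, rfl⟩ := hb
    rw [((Function.factorsThrough_iff _).mpr ⟨g, rfl⟩).extend_apply,
      Set.indicator_of_mem (Set.mem_range_self a), Function.comp_apply]
  · rw [Function.extend_apply' _ _ _ hb, Set.indicator_of_notMem (by simpa using hb),
      Pi.zero_apply]

theorem Function.Injective.sum_ite_eq_extend {α β γ : Type*} [Fintype α] [DecidableEq β]
    [AddCommMonoid γ] {f : α → β} (hf : f.Injective) (g : α → γ) (b : β) :
    ∑ a, (if f a = b then g a else 0) = Function.extend f g 0 b := by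
  classical
  by_cases hb : ∃ a, f a = b
  · obtain ⟨a, rfl⟩ := hb
    simp [hf.eq_iff, hf.extend_apply]
  · rw [Function.extend_apply' _ _ _ hb, Pi.zero_apply]
    exact Finset.sum_eq_zero fun a _ => if_neg fun h => hb ⟨a, h⟩

theorem Finset.ite_and_mem_eq_sum {ι R : Type*} [DecidableEq ι] [AddCommMonoidWithOne R]
    (s : Finset ι) (P : Prop) [Decidable P] (x : ι) :
    (if P ∧ x ∈ s then (1 : R) else 0) = ∑ d ∈ s, if P ∧ x = d then 1 else 0 := by
  simp_rw [ite_and, Finset.sum_ite_irrel, Finset.sum_ite_eq, Finset.sum_const_zero]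

theorem Equiv.Perm.permMatrix_mul_eq_mul_permMatrix {n R : Type*} [Fintype n] [DecidableEq n]
    [NonAssocSemiring R] (σ : Equiv.Perm n) {A : Matrix n n R}
    (hA : ∀ i j, A (σ i) (σ j) = A i j) :
    σ.permMatrix R * A = A * σ.permMatrix R := by
  rw [PEquiv.toMatrix_toPEquiv_mul, PEquiv.mul_toMatrix_toPEquiv]
  ext i j
  simpa using hA i (σ.symm j)

def graphATriangle (k : ℕ) : Set (ℤ × ℤ) := {c | 0 ≤ c.1 ∧ 0 ≤ c.2 ∧ c.1 + c.2 ≤ k}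

def graphASteps : Finset (ℤ × ℤ) := {(1, 0), (-1, 1), (0, -1)}

theorem sum_graphASteps {M : Type*} [AddCommMonoid M] (f : ℤ × ℤ → M) :
    ∑ d ∈ graphASteps, f d = f (1, 0) + f (-1, 1) + f (0, -1) := by
  simp [graphASteps, add_assoc]

theorem sum_graphASteps_indicator_add_eq_sum_indicator_sub {k : ℕ} {a b : ℤ × ℤ}
    (ha : a ∈ graphATriangle k) (hb : b ∈ graphATriangle k) :
    ∑ d ∈ graphASteps, (graphATriangle k).indicator
        (fun c => if c - b ∈ graphASteps then (1 : ℤ) else 0) (a + d) =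
      ∑ d ∈ graphASteps, (graphATriangle k).indicator
        (fun c => if b - c ∈ graphASteps then (1 : ℤ) else 0) (a - d) := by
  classical
  obtain ⟨p, l⟩ := a
  obtain ⟨q, m⟩ := b
  simp only [graphATriangle, Set.mem_ofPred_eq] at ha hb
  simp only [Set.indicator_apply, ← ite_and]
  -- For `a = b` both sides are the degree of `a`; otherwise, once `∈ graphASteps` is expanded,
  -- both sides count the same pairs of steps `(d, d')` with `a + d = b + d'`, term by term.
  rcases eq_or_ne (p, l) (q, m) with h | hab
  · obtain ⟨rfl, rfl⟩ := Prod.mk.inj h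
    simp only [add_sub_cancel_left, sub_sub_cancel]
    rw [Finset.sum_congr rfl fun d hd => if_congr (and_iff_left hd) rfl rfl,
      Finset.sum_congr rfl fun d hd => if_congr (and_iff_left hd) rfl rfl,
      sum_graphASteps, sum_graphASteps]
    simp only [graphATriangle, Set.mem_ofPred_eq, Prod.mk_add_mk, Prod.mk_sub_mk]
    split_ifs <;> omega
  · simp_rw [Finset.ite_and_mem_eq_sum]
    rw [Finset.sum_comm (s := graphASteps) (t := graphASteps) (f := fun d d' =>
      if (p, l) - d ∈ graphATriangle k ∧ (q, m) - ((p, l) - d) = d' then (1 : ℤ) else 0)]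
    refine Finset.sum_congr rfl fun d hd => Finset.sum_congr rfl fun d' hd' => ?_
    simp only [graphASteps, Finset.mem_insert, Finset.mem_singleton] at hd hd'
    simp only [Ne, Prod.mk.injEq] at hab
    rcases hd with rfl | rfl | rfl <;> rcases hd' with rfl | rfl | rfl <;>
      simp only [graphATriangle, Set.mem_ofPred_eq, Prod.mk_add_mk, Prod.mk_sub_mk,
        Prod.mk.injEq] <;>
      split_ifs <;> omega

namespace GraphAVertex

variable {k : ℕ}

def mk (p l : ℕ) (h : p + l ≤ k) : GraphAVertex k := ⟨(⟨p, by omega⟩, ⟨l, by omega⟩), h⟩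

def origin : GraphAVertex k := mk 0 0 (by omega)

def coord (v : GraphAVertex k) : ℤ × ℤ := ((v.1.1 : ℕ), (v.1.2 : ℕ))

theorem coord_origin : coord (origin (k := k)) = 0 := rfl

theorem coord_injective : Function.Injective (coord (k := k)) := by
  rintro ⟨⟨⟨p, _⟩, ⟨l, _⟩⟩, _⟩ ⟨⟨⟨p', _⟩, ⟨l', _⟩⟩, _⟩ h
  simp only [coord, Prod.mk.injEq, Nat.cast_inj] at h
  obtain ⟨rfl, rfl⟩ := h
  rfl

theorem coord_mem_graphATriangle (v : GraphAVertex k) : coord v ∈ graphATriangle k := by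
  have := v.2
  simp only [coord, graphATriangle, Set.mem_ofPred_eq]
  omega

theorem range_coord : Set.range (coord (k := k)) = graphATriangle k := by
  refine Set.Subset.antisymm (Set.range_subset_iff.2 coord_mem_graphATriangle) ?_
  rintro ⟨a, b⟩ ⟨ha, hb, hab⟩
  lift a to ℕ using ha
  lift b to ℕ using hb
  exact ⟨mk a b (by omega), rfl⟩

end GraphAVertex

open GraphAVertex

section Adjacency

variable {k : ℕ}

theorem graphAAdj_apply (v w : GraphAVertex k) :
    graphAAdj k v w = if coord w - coord v ∈ graphASteps then 1 else 0 := by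
  have := v.2
  have := w.2
  simp only [graphAAdj, coord, graphASteps, Finset.mem_insert, Finset.mem_singleton,
    Prod.ext_iff, Prod.fst_sub, Prod.snd_sub]
  congr 1
  apply propext
  omega

-- Extending `x` by zero to `ℤ × ℤ` makes the neighbours outside the triangle contribute `0`.
theorem sum_graphAAdj_mul (v : GraphAVertex k) (x : GraphAVertex k → ℤ) :
    ∑ u, graphAAdj k v u * x u = ∑ d ∈ graphASteps, Function.extend coord x 0 (coord v + d) := by
  have h (u : GraphAVertex k) : graphAAdj k v u * x u =
      ∑ d ∈ graphASteps, if coord u = coord v + d then x u else 0 := by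
    simp_rw [graphAAdj_apply, ite_mul, one_mul, zero_mul, ← sub_eq_iff_eq_add',
      Finset.sum_ite_eq]
  simp_rw [h]
  rw [Finset.sum_comm]
  simp_rw [coord_injective.sum_ite_eq_extend]

theorem sum_mul_graphAAdj (w : GraphAVertex k) (x : GraphAVertex k → ℤ) :
    ∑ u, x u * graphAAdj k u w = ∑ d ∈ graphASteps, Function.extend coord x 0 (coord w - d) := by
  have h (u : GraphAVertex k) : x u * graphAAdj k u w =
      ∑ d ∈ graphASteps, if coord u = coord w - d then x u else 0 := by
    have hd (d : ℤ × ℤ) : coord u = coord w - d ↔ coord w - coord u = d := by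
      rw [sub_eq_iff_eq_add', eq_comm, sub_eq_iff_eq_add]
    simp_rw [graphAAdj_apply, mul_ite, mul_one, mul_zero, hd, Finset.sum_ite_eq]
  simp_rw [h]
  rw [Finset.sum_comm]
  simp_rw [coord_injective.sum_ite_eq_extend]

theorem commute_graphAAdj_transpose : Commute (graphAAdj k) (graphAAdj k)ᵀ := by
  ext v w
  simp only [Matrix.mul_apply, Matrix.transpose_apply]
  rw [sum_graphAAdj_mul]
  simp_rw [mul_comm (graphAAdj k _ v)]
  rw [sum_mul_graphAAdj]
  have hrow : graphAAdj k w = (fun c => if c - coord w ∈ graphASteps then 1 else 0) ∘ coord :=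
    funext (graphAAdj_apply w)
  have hcol : (fun u => graphAAdj k u w) =
      (fun c => if coord w - c ∈ graphASteps then 1 else 0) ∘ coord :=
    funext fun u => graphAAdj_apply u w
  rw [hrow, hcol, Function.extend_comp_eq_indicator, Function.extend_comp_eq_indicator,
    range_coord]
  exact sum_graphASteps_indicator_add_eq_sum_indicator_sub (coord_mem_graphATriangle v)
    (coord_mem_graphATriangle w)

end Adjacency

abbrev graphACommutant (k : ℕ) : Subring (Matrix (GraphAVertex k) (GraphAVertex k) ℤ) :=
  Subring.centralizer {graphAAdj k, (graphAAdj k)ᵀ}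

section Commutant

variable {k : ℕ}

theorem mem_graphACommutant {M : Matrix (GraphAVertex k) (GraphAVertex k) ℤ} :
    M ∈ graphACommutant k ↔ Commute (graphAAdj k) M ∧ Commute (graphAAdj k)ᵀ M := by
  simp [Subring.mem_centralizer_iff, Commute, SemiconjBy]

theorem graphAFusion_mem_graphACommutant (j : ℕ) : graphAFusion k j ∈ graphACommutant k := by
  have hΔ : graphAAdj k ∈ graphACommutant k :=
    mem_graphACommutant.2 ⟨Commute.refl _, commute_graphAAdj_transpose.symm⟩
  have hΔt : (graphAAdj k)ᵀ ∈ graphACommutant k :=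
    mem_graphACommutant.2 ⟨commute_graphAAdj_transpose, Commute.refl _⟩
  induction j using Nat.strong_induction_on with
  | _ j ih =>
    obtain _ | _ | _ | j := j
    · exact one_mem _
    · exact hΔ
    · exact sub_mem (mul_mem hΔ hΔ) hΔt
    · exact add_mem (sub_mem (mul_mem hΔ (ih _ (by omega))) (mul_mem hΔt (ih _ (by omega))))
        (ih _ (by omega))

theorem sum_extend_add_graphASteps_eq_zero {M : Matrix (GraphAVertex k) (GraphAVertex k) ℤ}
    (hM : M ∈ graphACommutant k) {w : GraphAVertex k} (hw : ∀ u, M u w = 0)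
    (v : GraphAVertex k) :
    ∑ d ∈ graphASteps, Function.extend coord (M v) 0 (coord w + d) = 0 := by
  have h := congrFun₂ (mem_graphACommutant.1 hM).2 v w
  simp only [Matrix.mul_apply, Matrix.transpose_apply, hw, mul_zero, Finset.sum_const_zero] at h
  rw [← sum_graphAAdj_mul, h]
  simp_rw [mul_comm]

theorem sum_extend_sub_graphASteps_eq_zero {M : Matrix (GraphAVertex k) (GraphAVertex k) ℤ}
    (hM : M ∈ graphACommutant k) {w : GraphAVertex k} (hw : ∀ u, M u w = 0)
    (v : GraphAVertex k) :
    ∑ d ∈ graphASteps, Function.extend coord (M v) 0 (coord w - d) = 0 := by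
  have h := congrFun₂ (mem_graphACommutant.1 hM).1 v w
  simp only [Matrix.mul_apply, hw, mul_zero, Finset.sum_const_zero] at h
  rw [← sum_mul_graphAAdj, h]

theorem eq_zero_of_mem_graphACommutant {M : Matrix (GraphAVertex k) (GraphAVertex k) ℤ}
    (hM : M ∈ graphACommutant k) (h0 : ∀ v, M v origin = 0) : M = 0 := by
  set X : GraphAVertex k → ℤ × ℤ → ℤ := fun v => Function.extend coord (M v) 0
  have hX (v w : GraphAVertex k) : X v (coord w) = M v w := coord_injective.extend_apply _ _ _
  have hXout (v : GraphAVertex k) {c : ℤ × ℤ} (hc : c ∉ graphATriangle k) : X v c = 0 := by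
    rw [← range_coord, Set.mem_range] at hc
    exact Function.extend_apply' _ _ _ hc
  -- Induction on `p + l`: the column at `(p, l)` comes from `MΔᵀ = ΔᵀM` at `(p - 1, l)` if `p > 0`,
  -- and from `MΔ = ΔM` at `(p, l - 1)` otherwise.
  suffices key : ∀ n : ℕ, ∀ c : ℤ × ℤ, (c.1 + c.2).toNat = n → ∀ v, X v c = 0 by
    ext v w
    rw [← hX]
    exact key _ _ rfl v
  intro n
  induction n using Nat.strong_induction_on with
  | _ n ih =>
  rintro ⟨p, l⟩ rfl v
  by_cases hc : (p, l) ∈ graphATriangle k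
  swap
  · exact hXout v hc
  simp only [graphATriangle, Set.mem_ofPred_eq] at hc
  have below (c : ℤ × ℤ) (hlt : c.1 + c.2 < p + l) (u : GraphAVertex k) : X u c = 0 := by
    by_cases hc' : c ∈ graphATriangle k
    · exact ih _ (by simp only [graphATriangle, Set.mem_ofPred_eq] at hc'; omega) c rfl u
    · exact hXout u hc'
  have column (c : ℤ × ℤ) (hc' : c ∈ graphATriangle k) (hlt : c.1 + c.2 < p + l) :
      ∃ w, coord w = c ∧ ∀ u, M u w = 0 := by
    obtain ⟨w, rfl⟩ := range_coord (k := k) ▸ hc'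
    exact ⟨w, rfl, fun u => hX u w ▸ below _ hlt u⟩
  rcases Int.lt_or_le 0 p with hp | hp
  · obtain ⟨w, hw, hw0⟩ := column (p - 1, l) (by simp [graphATriangle]; omega) (by simp)
    have h := sum_extend_add_graphASteps_eq_zero hM hw0 v
    rw [sum_graphASteps, hw] at h
    have e1 := below ((p - 1, l) + (-1, 1)) (by simp; omega) v
    have e2 := below ((p - 1, l) + (0, -1)) (by simp; omega) v
    rw [show (p - 1, l) + (1, 0) = (p, l) by simp] at h
    linarith
  rcases Int.lt_or_le 0 l with hl | hl
  · obtain ⟨w, hw, hw0⟩ := column (p, l - 1) (by simp [graphATriangle]; omega) (by simp)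
    have h := sum_extend_sub_graphASteps_eq_zero hM hw0 v
    rw [sum_graphASteps, hw] at h
    have e1 := below ((p, l - 1) - (1, 0)) (by simp; omega) v
    have e2 := below ((p, l - 1) - (-1, 1)) (by simp) v
    rw [show (p, l - 1) - (0, -1) = (p, l) by simp] at h
    linarith
  obtain ⟨rfl, rfl⟩ : p = 0 ∧ l = 0 := by omega
  rw [show ((0 : ℤ), (0 : ℤ)) = coord origin from rfl, hX]
  exact h0 v

theorem eq_of_mem_graphACommutant {M M' : Matrix (GraphAVertex k) (GraphAVertex k) ℤ}
    (hM : M ∈ graphACommutant k) (hM' : M' ∈ graphACommutant k)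
    (h : ∀ v, M v origin = M' v origin) : M = M' :=
  sub_eq_zero.1 <| eq_zero_of_mem_graphACommutant (sub_mem hM hM') fun v => by
    rw [Matrix.sub_apply, h, sub_self]

end Commutant

section FusionColumn

variable {k : ℕ}

theorem extend_coord_ite_eq {e : ℤ × ℤ} (he : e ∈ graphATriangle k) (c : ℤ × ℤ) :
    Function.extend (coord (k := k)) (fun u => if coord u = e then (1 : ℤ) else 0) 0 c =
      if c = e then 1 else 0 := by
  classical
  have : (fun u : GraphAVertex k => if coord u = e then (1 : ℤ) else 0) =
      (fun c => if c = e then 1 else 0) ∘ coord := rfl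
  rw [this, Function.extend_comp_eq_indicator, range_coord, Set.indicator_apply]
  by_cases hc : c = e
  · simp [hc, he]
  · simp [hc]

theorem graphAAdj_mul_sub_transpose_mul_apply_origin
    {N N' : Matrix (GraphAVertex k) (GraphAVertex k) ℤ} {j : ℕ} (hj : j + 1 ≤ k)
    (hN : ∀ u, N u origin = if coord u = (0, (j : ℤ) + 1) then 1 else 0)
    (hN' : ∀ u, N' u origin = if coord u = (0, (j : ℤ)) then 1 else 0) (v : GraphAVertex k) :
    (graphAAdj k * N - (graphAAdj k)ᵀ * N') v origin =
      (if coord v = (0, (j : ℤ) + 2) then 1 else 0) -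
        if coord v = (0, (j : ℤ) - 1) then 1 else 0 := by
  rw [Matrix.sub_apply, Matrix.mul_apply, Matrix.mul_apply]
  simp_rw [Matrix.transpose_apply, mul_comm (graphAAdj k _ v)]
  rw [sum_graphAAdj_mul, sum_mul_graphAAdj, funext hN, funext hN',
    Finset.sum_congr rfl fun d _ => extend_coord_ite_eq (by simp [graphATriangle]; omega) _,
    Finset.sum_congr rfl fun d _ => extend_coord_ite_eq (by simp [graphATriangle]; omega) _,
    sum_graphASteps, sum_graphASteps]
  have := coord_mem_graphATriangle v
  obtain ⟨p, l⟩ := coord v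
  simp only [graphATriangle, Set.mem_ofPred_eq] at this
  simp only [Prod.mk_add_mk, Prod.mk_sub_mk, Prod.mk.injEq]
  split_ifs <;> omega

theorem graphAFusion_apply_origin {j : ℕ} (hj : j ≤ k) (v : GraphAVertex k) :
    graphAFusion k j v origin = if coord v = (0, (j : ℤ)) then 1 else 0 := by
  induction j using Nat.strong_induction_on generalizing v with
  | _ j ih =>
    have col (m : ℕ) (hm : m < j) (hmk : m ≤ k) (n : ℤ) (hn : (m : ℤ) = n) (u : GraphAVertex k) :
        graphAFusion k m u origin = if coord u = (0, n) then 1 else 0 := by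
      rw [ih m hm hmk u, hn]
    clear ih
    obtain _ | _ | _ | j := j
    · simp [graphAFusion, Matrix.one_apply, ← coord_injective.eq_iff, coord_origin,
        Prod.mk_zero_zero]
    · have hv := coord_mem_graphATriangle v
      rw [graphAFusion, graphAAdj_apply, coord_origin, zero_sub]
      generalize coord v = c at hv ⊢
      obtain ⟨p, l⟩ := c
      simp only [graphATriangle, Set.mem_ofPred_eq] at hv
      congr 1
      apply propext
      simp only [graphASteps, Finset.mem_insert, Finset.mem_singleton, Prod.neg_mk,
        Prod.mk.injEq]
      omega
    · have hv : coord v ≠ (0, -1) := fun h => by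
        simpa [graphATriangle, h] using coord_mem_graphATriangle v
      have h := graphAAdj_mul_sub_transpose_mul_apply_origin (j := 0) (by omega)
        (col 1 (by omega) (by omega) _ rfl) (col 0 (by omega) (by omega) _ rfl) v
      rw [graphAFusion, graphAFusion, mul_one] at h
      simp [graphAFusion, h, hv]
    · rw [graphAFusion, Matrix.add_apply, graphAAdj_mul_sub_transpose_mul_apply_origin
        (j := j + 1) (by omega) (col (j + 2) (by omega) (by omega) _ (by push_cast; ring))
        (col (j + 1) (by omega) (by omega) _ rfl), col j (by omega) (by omega) _ rfl]
      push_cast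
      ring_nf

end FusionColumn

section Rotation

variable {k : ℕ}

theorem coord_graphASigma (v : GraphAVertex k) :
    coord (graphASigma k v) = ((k : ℤ) - (coord v).1 - (coord v).2, (coord v).1) := by
  have := v.2
  simp only [coord, graphASigma, Prod.mk.injEq, and_true]
  omega

theorem graphASigma_graphASigma_graphASigma (v : GraphAVertex k) :
    graphASigma k (graphASigma k (graphASigma k v)) = v :=
  coord_injective <| by simp only [coord_graphASigma]; ext <;> ring

theorem graphAAdj_graphASigma (v w : GraphAVertex k) :
    graphAAdj k (graphASigma k v) (graphASigma k w) = graphAAdj k v w := by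
  simp only [graphAAdj_apply, coord_graphASigma]
  congr 1
  apply propext
  simp only [graphASteps, Finset.mem_insert, Finset.mem_singleton, Prod.ext_iff, Prod.fst_sub,
    Prod.snd_sub]
  omega

theorem graphASigma_ne_id (hk : 1 ≤ k) : graphASigma k ≠ id := fun h => by
  have := congrArg coord (congrFun h origin)
  simp only [coord_graphASigma, coord_origin, id, Prod.fst_zero, Prod.snd_zero,
    Prod.mk_eq_zero] at this
  omega

def graphASigmaPerm (k : ℕ) : Equiv.Perm (GraphAVertex k) where
  toFun := graphASigma k
  invFun v := graphASigma k (graphASigma k v)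
  left_inv := graphASigma_graphASigma_graphASigma
  right_inv := graphASigma_graphASigma_graphASigma

theorem permMatrix_graphASigmaPerm_apply (v w : GraphAVertex k) :
    (graphASigmaPerm k).permMatrix ℤ v w = if w = graphASigma k v then 1 else 0 := by
  simp [PEquiv.toMatrix_apply, eq_comm, graphASigmaPerm]

theorem permMatrix_graphASigmaPerm_mem_graphACommutant :
    (graphASigmaPerm k).permMatrix ℤ ∈ graphACommutant k :=
  mem_graphACommutant.2
    ⟨((graphASigmaPerm k).permMatrix_mul_eq_mul_permMatrix graphAAdj_graphASigma).symm,
      ((graphASigmaPerm k).permMatrix_mul_eq_mul_permMatrix fun v w =>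
        graphAAdj_graphASigma w v).symm⟩

theorem permMatrix_graphASigmaPerm_apply_origin (v : GraphAVertex k) :
    (graphASigmaPerm k).permMatrix ℤ v origin = if coord v = (0, (k : ℤ)) then 1 else 0 := by
  rw [permMatrix_graphASigmaPerm_apply]
  congr 1
  apply propext
  rw [← coord_injective.eq_iff, coord_graphASigma, coord_origin]
  have := coord_mem_graphATriangle v
  generalize coord v = c at this ⊢
  obtain ⟨p, l⟩ := c
  simp only [graphATriangle, Set.mem_ofPred_eq, Prod.ext_iff, Prod.fst_zero,
    Prod.snd_zero] at this ⊢
  omega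

end Rotation

/-- **The permutation `P` of the Hilbert series theorem for `𝒜⁽ⁿ⁾` is the `ℤ₃` rotation**:
the fusion matrix `N_k` is the permutation matrix of `σ(p,l) = (k−p−l, p)`
(i.e. `N_k(v,w) = 1` if `w = σ(v)` and `0` otherwise); moreover `σ` is a bijection with
`σ∘σ∘σ = id` and `σ ≠ id` (so `σ` has order 3), and `σ` is an automorphism of the graph:
`Δ(σ(v),σ(w)) = Δ(v,w)` for all vertices `v, w`. -/
theorem graphAFusion_top_isPermMatrix (k : ℕ) (hk : 1 ≤ k) :
    (∀ v w : GraphAVertex k,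
        graphAFusion k k v w = if w = graphASigma k v then 1 else 0) ∧
    Function.Bijective (graphASigma k) ∧
    (∀ v : GraphAVertex k, graphASigma k (graphASigma k (graphASigma k v)) = v) ∧
    graphASigma k ≠ id ∧
    (∀ v w : GraphAVertex k,
        graphAAdj k (graphASigma k v) (graphASigma k w) = graphAAdj k v w) := by
  have hN : graphAFusion k k = (graphASigmaPerm k).permMatrix ℤ :=
    eq_of_mem_graphACommutant (graphAFusion_mem_graphACommutant k)
      permMatrix_graphASigmaPerm_mem_graphACommutant fun v => by
        rw [graphAFusion_apply_origin le_rfl, permMatrix_graphASigmaPerm_apply_origin]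
  refine ⟨fun v w => ?_, (graphASigmaPerm k).bijective, graphASigma_graphASigma_graphASigma,
    graphASigma_ne_id hk, graphAAdj_graphASigma⟩
  rw [hN, permMatrix_graphASigmaPerm_apply]
end

section
/- For the graph 𝒜⁽ⁿ⁾ the recursively defined fusion matrices truncate at level k: N_{k+1} = 0 and N_{k+2} = 0. (This reflects the vanishing λ_{(j,0)} = 0 for k < j ≤ k+2 in the level-k Verlinde fusion ring of SU(3), and is the hypothesis needed to derive the closed form of the matrix Hilbert series.) -/
open scoped Matrix

/-! ### Auxiliary integer-arithmetic layer -/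

/-- SU(3) Pieri (horizontal strip) indicator, as a function of integers. -/
def Cf (j p l X Y : ℤ) : ℤ :=
  if 3 ∣ (j - X + p + Y - l) ∧ 0 ≤ j - X + p + Y - l ∧ 3*(Y-l) ≤ j - X + p + Y - l ∧
      3*(p-X) ≤ j - X + p + Y - l ∧ j - X + p + Y - l ≤ 3*p ∧ j - X + p + Y - l ≤ 3*Y
  then 1 else 0

lemma Cf_div {j p l X Y e : ℤ} (h : j - X + p + Y - l = 3*e) :
    Cf j p l X Y = if 0 ≤ e ∧ Y - l ≤ e ∧ p - X ≤ e ∧ e ≤ p ∧ e ≤ Y then 1 else 0 := by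
  unfold Cf; split_ifs <;> omega

lemma Cf_ndiv {j p l X Y : ℤ} (h : ¬ (3 ∣ (j - X + p + Y - l))) : Cf j p l X Y = 0 := by
  unfold Cf; split_ifs <;> omega

lemma Cf_zero {j p l X Y : ℤ} (h : p < 0 ∨ l < 0 ∨ j < 0) : Cf j p l X Y = 0 := by
  unfold Cf; split_ifs <;> omega

set_option maxHeartbeats 2000000 in
/-- The classical SU(3) character recursion for the Pieri indicator. -/
lemma CfRec (j p l X Y : ℤ) (hj : -1 ≤ j) (hp : 0 ≤ p) (hl : 0 ≤ l) :
    Cf (j+3) p l X Y =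
      Cf (j+2) (p+1) l X Y + Cf (j+2) (p-1) (l+1) X Y + Cf (j+2) p (l-1) X Y
      - Cf (j+1) (p-1) l X Y - Cf (j+1) (p+1) (l-1) X Y - Cf (j+1) p (l+1) X Y
      + Cf j p l X Y := by
  by_cases h3 : 3 ∣ (j - X + p + Y - l)
  · obtain ⟨e, he⟩ := h3
    rw [Cf_div (e := e+1) (by omega), Cf_div (e := e+1) (by omega),
        Cf_div (e := e) (by omega), Cf_div (e := e+1) (by omega),
        Cf_div (e := e) (by omega), Cf_div (e := e+1) (by omega),
        Cf_div (e := e) (by omega), Cf_div (e := e) (by omega)]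
    split_ifs <;> omega
  · rw [Cf_ndiv (by omega), Cf_ndiv (by omega), Cf_ndiv (by omega), Cf_ndiv (by omega),
        Cf_ndiv (by omega), Cf_ndiv (by omega), Cf_ndiv (by omega), Cf_ndiv (by omega)]
    ring

/-- Truncated Kac–Walton fusion coefficient: three affine Weyl terms. -/
def Fent (k : ℕ) (j p l pp ll : ℤ) : ℤ :=
  Cf j p l pp ll - Cf j p l (k+1-ll) (k+1-pp) + Cf j p l (k+3+ll) (k-pp-ll)

lemma Fent_zero {k : ℕ} {j p l pp ll : ℤ} (h : p < 0 ∨ l < 0 ∨ j < 0) :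
    Fent k j p l pp ll = 0 := by
  unfold Fent; rw [Cf_zero h, Cf_zero h, Cf_zero h]; ring

lemma FentRec (k : ℕ) (j p l pp ll : ℤ) (hj : -1 ≤ j) (hp : 0 ≤ p) (hl : 0 ≤ l) :
    Fent k (j+3) p l pp ll =
      Fent k (j+2) (p+1) l pp ll + Fent k (j+2) (p-1) (l+1) pp ll + Fent k (j+2) p (l-1) pp ll
      - Fent k (j+1) (p-1) l pp ll - Fent k (j+1) (p+1) (l-1) pp ll - Fent k (j+1) p (l+1) pp ll
      + Fent k j p l pp ll := by
  unfold Fent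
  rw [CfRec j p l _ _ hj hp hl, CfRec j p l _ _ hj hp hl, CfRec j p l _ _ hj hp hl]
  ring

set_option maxHeartbeats 2000000 in
/-- Wall cancellation: on the affine wall `p + l = k` the two boundary contributions agree. -/
lemma FentWall {k : ℕ} {j p l pp ll : ℤ} (hj : -1 ≤ j) (hjk : j ≤ (k:ℤ) - 1)
    (hp : 0 ≤ p) (hl : 0 ≤ l) (hw : p + l = k) (hpp : 0 ≤ pp) (hll : 0 ≤ ll)
    (hs : pp + ll ≤ k) :
    Fent k (j+2) (p+1) l pp ll = Fent k (j+1) p (l+1) pp ll := by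
  unfold Fent
  by_cases h3 : 3 ∣ (j - pp + p + ll - l)
  · obtain ⟨e, he⟩ := h3
    rw [Cf_div (e := e+1) (by omega), Cf_div (e := e+1) (by push_cast; omega),
        Cf_div (e := e-ll) (by push_cast; omega),
        Cf_div (e := e) (by omega), Cf_div (e := e) (by push_cast; omega),
        Cf_div (e := e-ll-1) (by push_cast; omega)]
    split_ifs <;> omega
  · rw [Cf_ndiv (by omega), Cf_ndiv (by push_cast; omega), Cf_ndiv (by push_cast; omega),
        Cf_ndiv (by omega), Cf_ndiv (by push_cast; omega), Cf_ndiv (by push_cast; omega)]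

set_option maxHeartbeats 1000000 in
/-- Vanishing of the truncated Kac–Walton coefficient at `j = k+1` and `j = k+2`. -/
lemma Fent_trunc {k : ℕ} {j p l pp ll : ℤ} (hj : j = (k:ℤ)+1 ∨ j = (k:ℤ)+2)
    (hp : 0 ≤ p) (hl : 0 ≤ l) (hv : p + l ≤ k) (hpp : 0 ≤ pp) (hll : 0 ≤ ll)
    (hs : pp + ll ≤ k) :
    Fent k j p l pp ll = 0 := by
  unfold Fent
  by_cases h3 : 3 ∣ (j - pp + p + ll - l)
  · obtain ⟨e, he⟩ := h3
    rw [Cf_div (e := e) (by omega), Cf_div (e := e) (by push_cast; omega),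
        Cf_div (e := e-ll-1) (by push_cast; omega)]
    split_ifs <;> omega
  · rw [Cf_ndiv (by omega), Cf_ndiv (by push_cast; omega), Cf_ndiv (by push_cast; omega)]
    ring

/-! ### Matrix layer -/

/-- The candidate fusion matrices, for an integer index. -/
def FmatZ (k : ℕ) (j : ℤ) : Matrix (GraphAVertex k) (GraphAVertex k) ℤ :=
  fun v w => Fent k j (v.1.1 : ℕ) (v.1.2 : ℕ) (w.1.1 : ℕ) (w.1.2 : ℕ)

/-- Build a vertex from coordinates. -/
def mkV (k a b : ℕ) (h : a + b ≤ k) : GraphAVertex k :=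
  ⟨(⟨a, by omega⟩, ⟨b, by omega⟩), h⟩

lemma vert_ext {k : ℕ} {u u' : GraphAVertex k} (h1 : (u.1.1 : ℕ) = (u'.1.1 : ℕ))
    (h2 : (u.1.2 : ℕ) = (u'.1.2 : ℕ)) : u = u' :=
  Subtype.ext (Prod.ext (Fin.ext h1) (Fin.ext h2))

lemma sum_pick {k : ℕ} (f : GraphAVertex k → ℤ) (c : GraphAVertex k → Prop)
    [DecidablePred c] (u₁ : GraphAVertex k) (h₁ : c u₁) (huniq : ∀ u, c u → u = u₁) :
    (∑ u : GraphAVertex k, if c u then f u else 0) = f u₁ := by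
  rw [Finset.sum_eq_single_of_mem u₁ (Finset.mem_univ _), if_pos h₁]
  intro u _ hne
  exact if_neg fun hc => hne (huniq u hc)

lemma sum_none {k : ℕ} (f : GraphAVertex k → ℤ) (c : GraphAVertex k → Prop)
    [DecidablePred c] (h : ∀ u, ¬ c u) :
    (∑ u : GraphAVertex k, if c u then f u else 0) = 0 :=
  Finset.sum_eq_zero fun u _ => if_neg (h u)

lemma mulA_fmat (k : ℕ) (j : ℤ) (v w : GraphAVertex k) :
    (graphAAdj k * FmatZ k j) v w =
      (if (v.1.1 : ℕ) + (v.1.2 : ℕ) + 1 ≤ k then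
        Fent k j ((v.1.1 : ℕ) + 1 : ℤ) ((v.1.2 : ℕ) : ℤ) ((w.1.1 : ℕ) : ℤ) ((w.1.2 : ℕ) : ℤ)
       else 0)
      + Fent k j ((v.1.1 : ℕ) - 1 : ℤ) ((v.1.2 : ℕ) + 1 : ℤ) ((w.1.1 : ℕ) : ℤ) ((w.1.2 : ℕ) : ℤ)
      + Fent k j ((v.1.1 : ℕ) : ℤ) ((v.1.2 : ℕ) - 1 : ℤ) ((w.1.1 : ℕ) : ℤ) ((w.1.2 : ℕ) : ℤ) := by
  have hv := v.2
  rw [Matrix.mul_apply]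
  have hsum : ∀ u : GraphAVertex k, graphAAdj k v u * FmatZ k j u w =
      (if ((u.1.1 : ℕ) = (v.1.1 : ℕ) + 1 ∧ (u.1.2 : ℕ) = (v.1.2 : ℕ)) then FmatZ k j u w else 0)
      + (if (1 ≤ (v.1.1 : ℕ) ∧ (u.1.1 : ℕ) + 1 = (v.1.1 : ℕ) ∧ (u.1.2 : ℕ) = (v.1.2 : ℕ) + 1) then FmatZ k j u w else 0)
      + (if (1 ≤ (v.1.2 : ℕ) ∧ (u.1.1 : ℕ) = (v.1.1 : ℕ) ∧ (u.1.2 : ℕ) + 1 = (v.1.2 : ℕ)) then FmatZ k j u w else 0) := by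
    intro u
    unfold graphAAdj
    split_ifs <;> first | (exfalso; omega) | ring
  rw [Finset.sum_congr rfl fun u _ => hsum u, Finset.sum_add_distrib, Finset.sum_add_distrib]
  refine congrArg₂ (· + ·) (congrArg₂ (· + ·) ?_ ?_) ?_
  · by_cases h1 : (v.1.1 : ℕ) + (v.1.2 : ℕ) + 1 ≤ k
    · rw [if_pos h1, sum_pick _ _ (mkV k ((v.1.1 : ℕ) + 1) (v.1.2 : ℕ) (by omega))
        (by constructor <;> rfl)
        (fun u hc => vert_ext (by exact hc.1) (by exact hc.2))]
      simp only [FmatZ, mkV]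
      congr 1 <;> push_cast <;> omega
    · rw [if_neg h1, sum_none]
      intro u hc
      have := u.2
      omega
  · by_cases h2 : 1 ≤ (v.1.1 : ℕ)
    · rw [sum_pick _ _ (mkV k ((v.1.1 : ℕ) - 1) ((v.1.2 : ℕ) + 1) (by omega))
        (by refine ⟨h2, ?_, ?_⟩ <;> simp [mkV] <;> omega)
        (fun u hc => vert_ext (by simp [mkV]; omega) (by simp [mkV]; omega))]
      simp only [FmatZ, mkV]
      congr 1 <;> push_cast <;> omega
    · rw [sum_none _ _ (fun u hc => h2 hc.1), Fent_zero (by left; omega)]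
  · by_cases h3 : 1 ≤ (v.1.2 : ℕ)
    · rw [sum_pick _ _ (mkV k (v.1.1 : ℕ) ((v.1.2 : ℕ) - 1) (by omega))
        (by refine ⟨h3, ?_, ?_⟩ <;> simp [mkV] <;> omega)
        (fun u hc => vert_ext (by simp [mkV]; omega) (by simp [mkV]; omega))]
      simp only [FmatZ, mkV]
      congr 1 <;> push_cast <;> omega
    · rw [sum_none _ _ (fun u hc => h3 hc.1), Fent_zero (by right; left; omega)]

lemma mulT_fmat (k : ℕ) (j : ℤ) (v w : GraphAVertex k) :
    ((graphAAdj k)ᵀ * FmatZ k j) v w =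
      Fent k j ((v.1.1 : ℕ) - 1 : ℤ) ((v.1.2 : ℕ) : ℤ) ((w.1.1 : ℕ) : ℤ) ((w.1.2 : ℕ) : ℤ)
      + Fent k j ((v.1.1 : ℕ) + 1 : ℤ) ((v.1.2 : ℕ) - 1 : ℤ) ((w.1.1 : ℕ) : ℤ) ((w.1.2 : ℕ) : ℤ)
      + (if (v.1.1 : ℕ) + (v.1.2 : ℕ) + 1 ≤ k then
          Fent k j ((v.1.1 : ℕ) : ℤ) ((v.1.2 : ℕ) + 1 : ℤ) ((w.1.1 : ℕ) : ℤ) ((w.1.2 : ℕ) : ℤ)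
         else 0) := by
  have hv := v.2
  rw [Matrix.mul_apply]
  have hsum : ∀ u : GraphAVertex k, (graphAAdj k)ᵀ v u * FmatZ k j u w =
      (if ((v.1.1 : ℕ) = (u.1.1 : ℕ) + 1 ∧ (v.1.2 : ℕ) = (u.1.2 : ℕ)) then FmatZ k j u w else 0)
      + (if (1 ≤ (u.1.1 : ℕ) ∧ (v.1.1 : ℕ) + 1 = (u.1.1 : ℕ) ∧ (v.1.2 : ℕ) = (u.1.2 : ℕ) + 1) then FmatZ k j u w else 0)
      + (if (1 ≤ (u.1.2 : ℕ) ∧ (v.1.1 : ℕ) = (u.1.1 : ℕ) ∧ (v.1.2 : ℕ) + 1 = (u.1.2 : ℕ)) then FmatZ k j u w else 0) := by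
    intro u
    unfold graphAAdj Matrix.transpose
    simp only [Matrix.of_apply]
    split_ifs <;> first | (exfalso; omega) | ring
  rw [Finset.sum_congr rfl fun u _ => hsum u, Finset.sum_add_distrib, Finset.sum_add_distrib]
  refine congrArg₂ (· + ·) (congrArg₂ (· + ·) ?_ ?_) ?_
  · by_cases h1 : 1 ≤ (v.1.1 : ℕ)
    · rw [sum_pick _ _ (mkV k ((v.1.1 : ℕ) - 1) (v.1.2 : ℕ) (by omega))
        (by constructor <;> simp [mkV] <;> omega)
        (fun u hc => vert_ext (by simp [mkV]; omega) (by simp [mkV]; omega))]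
      simp only [FmatZ, mkV]
      congr 1 <;> push_cast <;> omega
    · rw [sum_none _ _ (fun u hc => by omega), Fent_zero (by left; omega)]
  · by_cases h2 : 1 ≤ (v.1.2 : ℕ)
    · rw [sum_pick _ _ (mkV k ((v.1.1 : ℕ) + 1) ((v.1.2 : ℕ) - 1) (by omega))
        (by refine ⟨by simp [mkV], ?_, ?_⟩ <;> simp [mkV] <;> omega)
        (fun u hc => vert_ext (by simp [mkV]; omega) (by simp [mkV]; omega))]
      simp only [FmatZ, mkV]
      congr 1 <;> push_cast <;> omega
    · rw [sum_none _ _ (fun u hc => by omega), Fent_zero (by right; left; omega)]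
  · by_cases h3 : (v.1.1 : ℕ) + (v.1.2 : ℕ) + 1 ≤ k
    · rw [if_pos h3, sum_pick _ _ (mkV k (v.1.1 : ℕ) ((v.1.2 : ℕ) + 1) (by omega))
        (by refine ⟨by simp [mkV], ?_, ?_⟩ <;> simp [mkV])
        (fun u hc => vert_ext (by simp [mkV]; omega) (by simp [mkV]; omega))]
      simp only [FmatZ, mkV]
      congr 1 <;> push_cast <;> omega
    · rw [if_neg h3, sum_none]
      intro u hc
      have := u.2
      omega

/-- The matrix form of the recursion for the candidate matrices. -/
lemma stepF (k : ℕ) (j : ℤ) (hj : -1 ≤ j) (hjk : j ≤ (k:ℤ) - 1) :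
    graphAAdj k * FmatZ k (j+2) - (graphAAdj k)ᵀ * FmatZ k (j+1) + FmatZ k j
      = FmatZ k (j+3) := by
  ext v w
  have hv := v.2
  have hw := w.2
  simp only [Matrix.add_apply, Matrix.sub_apply]
  rw [mulA_fmat, mulT_fmat]
  have hrec := FentRec k j ((v.1.1 : ℕ) : ℤ) ((v.1.2 : ℕ) : ℤ) ((w.1.1 : ℕ) : ℤ)
    ((w.1.2 : ℕ) : ℤ) hj (by positivity) (by positivity)
  by_cases hwall : (v.1.1 : ℕ) + (v.1.2 : ℕ) + 1 ≤ k
  · rw [if_pos hwall, if_pos hwall]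
    simp only [FmatZ]
    rw [hrec]
    ring
  · rw [if_neg hwall, if_neg hwall]
    have hweq : ((v.1.1 : ℕ) : ℤ) + ((v.1.2 : ℕ) : ℤ) = (k : ℤ) := by push_cast; omega
    have hWall := FentWall (k := k) (pp := ((w.1.1 : ℕ) : ℤ)) (ll := ((w.1.2 : ℕ) : ℤ))
      hj hjk (by positivity) (by positivity) hweq (by positivity) (by positivity)
      (by push_cast; omega)
    simp only [FmatZ]
    rw [hrec]
    rw [hWall]
    ring

lemma Fmat0 (k : ℕ) : FmatZ k 0 = 1 := by
  ext v w
  have hv := v.2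
  have hw := w.2
  simp only [FmatZ, Matrix.one_apply, Fent, Cf]
  by_cases hvw : v = w
  · subst hvw
    rw [if_pos rfl]
    split_ifs <;> omega
  · rw [if_neg hvw]
    have hne : ¬((v.1.1 : ℕ) = (w.1.1 : ℕ) ∧ (v.1.2 : ℕ) = (w.1.2 : ℕ)) :=
      fun h => hvw (vert_ext h.1 h.2)
    split_ifs <;> omega

lemma Fmat1 (k : ℕ) : FmatZ k 1 = graphAAdj k := by
  ext v w
  have hv := v.2
  have hw := w.2
  simp only [FmatZ, graphAAdj, Fent, Cf]
  split_ifs <;> omega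

lemma Fmat_neg (k : ℕ) : FmatZ k (-1) = 0 := by
  ext v w
  simp only [FmatZ, Matrix.zero_apply]
  exact Fent_zero (by right; right; norm_num)

lemma fusion_eq (k : ℕ) : ∀ j : ℕ, j ≤ k + 2 → graphAFusion k j = FmatZ k (j : ℤ)
  | 0, _ => by rw [show ((0:ℕ):ℤ) = 0 from rfl, Fmat0]; rfl
  | 1, _ => by rw [show ((1:ℕ):ℤ) = 1 from rfl, Fmat1]; rfl
  | 2, _ => by
      have h := stepF k (-1) (by norm_num) (by omega)
      norm_num at h
      rw [Fmat1, Fmat0, Fmat_neg] at h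
      show graphAAdj k * graphAAdj k - (graphAAdj k)ᵀ = _
      rw [show ((2:ℕ):ℤ) = 2 from rfl, ← h]
      simp [Matrix.mul_one]
  | (j+3), h => by
      show graphAAdj k * graphAFusion k (j + 2) - (graphAAdj k)ᵀ * graphAFusion k (j + 1)
        + graphAFusion k j = _
      rw [fusion_eq k (j+2) (by omega), fusion_eq k (j+1) (by omega),
          fusion_eq k j (by omega)]
      have e2 : ((j+2:ℕ):ℤ) = (j:ℤ)+2 := by push_cast; ring
      have e1 : ((j+1:ℕ):ℤ) = (j:ℤ)+1 := by push_cast; ring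
      have e3 : ((j+3:ℕ):ℤ) = (j:ℤ)+3 := by push_cast; ring
      rw [e2, e1, e3]
      exact stepF k j (by omega) (by omega)

/-- **Truncation of the fusion matrices of `𝒜⁽ⁿ⁾` at level `k`**: the recursively defined
fusion matrices satisfy `N_{k+1} = 0` and `N_{k+2} = 0`, reflecting the vanishing
`λ_{(j,0)} = 0` for `k < j ≤ k+2` in the level-`k` Verlinde fusion ring of `SU(3)`. -/
theorem graphAFusion_truncates (k : ℕ) (hk : 1 ≤ k) :
    graphAFusion k (k + 1) = 0 ∧ graphAFusion k (k + 2) = 0 := by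
  constructor
  · rw [fusion_eq k (k+1) (by omega)]
    ext v w
    have hv := v.2
    have hw := w.2
    simp only [FmatZ, Matrix.zero_apply]
    exact Fent_trunc (by left; push_cast; ring) (by positivity) (by positivity)
      (by push_cast; omega) (by positivity) (by positivity) (by push_cast; omega)
  · rw [fusion_eq k (k+2) (by omega)]
    ext v w
    have hv := v.2
    have hw := w.2
    simp only [FmatZ, Matrix.zero_apply]
    exact Fent_trunc (by right; push_cast; ring) (by positivity) (by positivity)
      (by push_cast; omega) (by positivity) (by positivity) (by push_cast; omega)
end

section
/- If U₁, U₂ ∈ A satisfy (H1) Uᵢ² = (q+q⁻¹)·Uᵢ for i = 1,2, then with gᵢ = q⁻¹·1 − Uᵢ the q-antisymmetrizer over the symmetric group S₃ satisfies 1 − q·g₁ − q·g₂ + q²·g₁g₂ + q²·g₂g₁ − q³·g₁g₂g₁ = q³·(U₁U₂U₁ − U₁). In particular, since q ≠ 0, the vanishing of the q-antisymmetrizer Σ_{σ∈S₃} (−q)^{ℓ(σ)} g_σ is equivalent to the Temperley–Lieb relation U₁U₂U₁ = U₁; this is the reduction of the vanishing of the q-antisymmetrizer condition for SU(2). -/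
/-- The Hecke generator `g = q⁻¹·1 − U` associated to a Temperley–Lieb generator `U`. -/
noncomputable def heckeG {A : Type*} [Ring A] [Algebra ℂ A] (q : ℂ) (U : A) : A :=
  q⁻¹ • (1 : A) - U

/-- The `q`-antisymmetrizer over `S₃`:
`1 − q·g₁ − q·g₂ + q²·g₁g₂ + q²·g₂g₁ − q³·g₁g₂g₁`. -/
noncomputable def qAntisym3 {A : Type*} [Ring A] [Algebra ℂ A] (q : ℂ) (g₁ g₂ : A) : A :=
  1 - q • g₁ - q • g₂ + q ^ 2 • (g₁ * g₂) + q ^ 2 • (g₂ * g₁) - q ^ 3 • (g₁ * g₂ * g₁)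

/-- **Vanishing of the `q`-antisymmetrizer for SU(2)**: if `U₁, U₂` satisfy (H1)
`Uᵢ² = (q+q⁻¹)·Uᵢ`, then with `gᵢ = q⁻¹·1 − Uᵢ` the `q`-antisymmetrizer over `S₃`
satisfies `1 − q·g₁ − q·g₂ + q²·g₁g₂ + q²·g₂g₁ − q³·g₁g₂g₁ = q³·(U₁U₂U₁ − U₁)`; in
particular, since `q ≠ 0`, it vanishes iff the Temperley–Lieb relation `U₁U₂U₁ = U₁`
holds. -/
theorem qAntisym3_eq {A : Type*} [Ring A] [Algebra ℂ A] (q : ℂ) (hq : q ≠ 0)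
    (U₁ U₂ : A)
    (h1 : U₁ * U₁ = (q + q⁻¹) • U₁) (h2 : U₂ * U₂ = (q + q⁻¹) • U₂) :
    (qAntisym3 q (heckeG q U₁) (heckeG q U₂) = q ^ 3 • (U₁ * U₂ * U₁ - U₁)) ∧
    (qAntisym3 q (heckeG q U₁) (heckeG q U₂) = 0 ↔ U₁ * U₂ * U₁ = U₁) := by
  have key : qAntisym3 q (heckeG q U₁) (heckeG q U₂) = q ^ 3 • (U₁ * U₂ * U₁ - U₁) := by
    simp only [qAntisym3, heckeG, sub_mul, mul_sub, smul_mul_assoc, mul_smul_comm,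
      one_mul, mul_one, smul_smul, smul_sub, smul_add, h1, h2]
    match_scalars <;> field_simp <;> ring
  refine ⟨key, ?_⟩
  rw [key, smul_eq_zero, sub_eq_zero]
  simp [pow_eq_zero_iff, hq]
end

section
/- Suppose U₁, U₂, U₃ ∈ A satisfy (H1) Uᵢ² = (q+q⁻¹)·Uᵢ, (H2) U₁U₃ = U₃U₁, and (H3) U₁U₂U₁ − U₁ = U₂U₁U₂ − U₂ and U₂U₃U₂ − U₂ = U₃U₂U₃ − U₃. With gᵢ = q⁻¹·1 − Uᵢ, consider the q-antisymmetrizer over S₄ given by the product A₄ := (1 − q·g₁ − q·g₂ + q²·g₁g₂ + q²·g₂g₁ − q³·g₁g₂g₁) · (1 − q·g₃ + q²·g₃g₂ − q³·g₃g₂g₁) (this equals Σ_{σ∈S₄} (−q)^{ℓ(σ)} g_σ, which is well defined since the gᵢ satisfy the braid relations). Then A₄ = 0 if and only if (U₁ − U₃U₂U₁ + U₂)·(U₂U₃U₂ − U₂) = 0. (This is the reduction of the vanishing of the q-antisymmetrizer for SU(3) to the defining extra relation of the A₂-Temperley–Lieb algebra.) -/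
/-- The second factor `1 − q·g₃ + q²·g₃g₂ − q³·g₃g₂g₁` of the `q`-antisymmetrizer over
`S₄`. -/
noncomputable def qAntisym4Factor {A : Type*} [Ring A] [Algebra ℂ A] (q : ℂ)
    (g₁ g₂ g₃ : A) : A :=
  1 - q • g₃ + q ^ 2 • (g₃ * g₂) - q ^ 3 • (g₃ * g₂ * g₁)

set_option maxHeartbeats 4000000 in
/-- **Vanishing of the `q`-antisymmetrizer for SU(3)**: suppose `U₁, U₂, U₃` satisfy (H1)
`Uᵢ² = (q+q⁻¹)·Uᵢ`, (H2) `U₁U₃ = U₃U₁`, and (H3) for both consecutive pairs. With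
`gᵢ = q⁻¹·1 − Uᵢ`, the `q`-antisymmetrizer over `S₄`,
`A₄ = (1 − q·g₁ − q·g₂ + q²·g₁g₂ + q²·g₂g₁ − q³·g₁g₂g₁)·(1 − q·g₃ + q²·g₃g₂ − q³·g₃g₂g₁)`,
vanishes if and only if `(U₁ − U₃U₂U₁ + U₂)·(U₂U₃U₂ − U₂) = 0`, the defining extra
relation of the `A₂`-Temperley–Lieb algebra. -/
theorem qAntisym4_vanishes_iff {A : Type*} [Ring A] [Algebra ℂ A] (q : ℂ) (hq : q ≠ 0)
    (U₁ U₂ U₃ : A)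
    (h11 : U₁ * U₁ = (q + q⁻¹) • U₁)
    (h12 : U₂ * U₂ = (q + q⁻¹) • U₂)
    (h13 : U₃ * U₃ = (q + q⁻¹) • U₃)
    (hH2 : U₁ * U₃ = U₃ * U₁)
    (hH3a : U₁ * U₂ * U₁ - U₁ = U₂ * U₁ * U₂ - U₂)
    (hH3b : U₂ * U₃ * U₂ - U₂ = U₃ * U₂ * U₃ - U₃) :
    qAntisym3 q (heckeG q U₁) (heckeG q U₂) *
        qAntisym4Factor q (heckeG q U₁) (heckeG q U₂) (heckeG q U₃) = 0 ↔
    (U₁ - U₃ * U₂ * U₁ + U₂) * (U₂ * U₃ * U₂ - U₂) = 0 := by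
  -- continuation variants of the quadratic relations
  have h11' : ∀ x : A, U₁ * (U₁ * x) = (q + q⁻¹) • (U₁ * x) := fun x => by
    rw [← mul_assoc, h11, smul_mul_assoc]
  have h12' : ∀ x : A, U₂ * (U₂ * x) = (q + q⁻¹) • (U₂ * x) := fun x => by
    rw [← mul_assoc, h12, smul_mul_assoc]
  have h13' : ∀ x : A, U₃ * (U₃ * x) = (q + q⁻¹) • (U₃ * x) := fun x => by
    rw [← mul_assoc, h13, smul_mul_assoc]
  -- commutation, oriented U₃U₁ → U₁U₃
  have h31 : U₃ * U₁ = U₁ * U₃ := hH2.symm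
  have h31' : ∀ x : A, U₃ * (U₁ * x) = U₁ * (U₃ * x) := fun x => by
    rw [← mul_assoc, h31, mul_assoc]
  -- braid relations, oriented to push smaller indices left
  have h212 : U₂ * (U₁ * U₂) = U₁ * (U₂ * U₁) - U₁ + U₂ := by
    have h := hH3a
    rw [mul_assoc, mul_assoc] at h
    rw [h]; abel
  have h212' : ∀ x : A, U₂ * (U₁ * (U₂ * x)) = U₁ * (U₂ * (U₁ * x)) - U₁ * x + U₂ * x :=
    fun x => by
    calc U₂ * (U₁ * (U₂ * x)) = U₂ * (U₁ * U₂) * x := by simp only [mul_assoc]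
    _ = (U₁ * (U₂ * U₁) - U₁ + U₂) * x := by rw [h212]
    _ = U₁ * (U₂ * (U₁ * x)) - U₁ * x + U₂ * x := by
        simp only [add_mul, sub_mul, mul_assoc]
  have h323 : U₃ * (U₂ * U₃) = U₂ * (U₃ * U₂) - U₂ + U₃ := by
    have h := hH3b
    rw [mul_assoc, mul_assoc] at h
    rw [h]; abel
  have h323' : ∀ x : A, U₃ * (U₂ * (U₃ * x)) = U₂ * (U₃ * (U₂ * x)) - U₂ * x + U₃ * x :=
    fun x => by
    calc U₃ * (U₂ * (U₃ * x)) = U₃ * (U₂ * U₃) * x := by simp only [mul_assoc]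
    _ = (U₂ * (U₃ * U₂) - U₂ + U₃) * x := by rw [h323]
    _ = U₂ * (U₃ * (U₂ * x)) - U₂ * x + U₃ * x := by
        simp only [add_mul, sub_mul, mul_assoc]
  -- derived rule: U₃U₂U₁U₃ = U₂U₃U₂U₁ − U₂U₁ + U₁U₃
  have h3213 : ∀ x : A, U₃ * (U₂ * (U₁ * (U₃ * x)))
      = U₂ * (U₃ * (U₂ * (U₁ * x))) - U₂ * (U₁ * x) + U₁ * (U₃ * x) := fun x => by
    calc U₃ * (U₂ * (U₁ * (U₃ * x))) = U₃ * (U₂ * (U₃ * (U₁ * x))) := by rw [h31']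
    _ = U₂ * (U₃ * (U₂ * (U₁ * x))) - U₂ * (U₁ * x) + U₃ * (U₁ * x) := h323' _
    _ = U₂ * (U₃ * (U₂ * (U₁ * x))) - U₂ * (U₁ * x) + U₁ * (U₃ * x) := by rw [h31']
  have h3213'' : U₃ * (U₂ * (U₁ * U₃))
      = U₂ * (U₃ * (U₂ * U₁)) - U₂ * U₁ + U₁ * U₃ := by
    calc U₃ * (U₂ * (U₁ * U₃)) = U₃ * (U₂ * (U₃ * U₁)) := by rw [h31]
    _ = U₂ * (U₃ * (U₂ * U₁)) - U₂ * U₁ + U₃ * U₁ := h323' _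
    _ = U₂ * (U₃ * (U₂ * U₁)) - U₂ * U₁ + U₁ * U₃ := by rw [h31]
  have hA3 : qAntisym3 q (heckeG q U₁) (heckeG q U₂)
      = q ^ 3 • (U₁ * (U₂ * U₁) - U₁) := by
    simp only [qAntisym3, heckeG]
    simp only [mul_sub, sub_mul, mul_add, add_mul, smul_sub, smul_add, smul_smul,
      smul_mul_assoc, mul_smul_comm, one_mul, mul_one, mul_assoc, h11, h11']
    match_scalars <;> field_simp <;> ring
  have hF : qAntisym4Factor q (heckeG q U₁) (heckeG q U₂) (heckeG q U₃)
      = q • U₁ + q • U₃ - q ^ 2 • (U₂ * U₁) - q ^ 2 • (U₃ * U₁)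
        + q ^ 3 • (U₃ * (U₂ * U₁)) := by
    simp only [qAntisym4Factor, heckeG]
    simp only [mul_sub, sub_mul, mul_add, add_mul, smul_sub, smul_add, smul_smul,
      smul_mul_assoc, mul_smul_comm, one_mul, mul_one, mul_assoc]
    match_scalars <;> field_simp <;> ring
  have key : qAntisym3 q (heckeG q U₁) (heckeG q U₂) *
        qAntisym4Factor q (heckeG q U₁) (heckeG q U₂) (heckeG q U₃)
      = (-(q ^ 6)) • ((U₁ - U₃ * U₂ * U₁ + U₂) * (U₂ * U₃ * U₂ - U₂)) := by
    rw [hA3, hF]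
    simp only [mul_sub, sub_mul, mul_add, add_mul, smul_sub, smul_add, smul_smul,
      smul_mul_assoc, mul_smul_comm, one_mul, mul_one, mul_assoc,
      h11, h11', h12, h12', h13, h13', h31, h31', h212, h212', h323, h323',
      h3213, h3213'']
    match_scalars <;> field_simp <;> ring
  rw [key, smul_eq_zero]
  have h6 : (-(q ^ 6) : ℂ) ≠ 0 := neg_ne_zero.mpr (pow_ne_zero 6 hq)
  simp [h6]
end

section
/- For all p ∈ ℕ and all j with 2j ≤ p, one has a(p, p−2j) = C(p,j) − C(p,j−1), where C denotes the binomial coefficient and C(p,j−1) is read as 0 when j = 0 (note C(p,j−1) ≤ C(p,j) when 2j ≤ p, so the subtraction is valid in ℕ). Moreover a(p,m) = 0 whenever m > p or p − m is odd. (These are the multiplicities in the decomposition ρ^p = ⊕_{j=0}^{⌊p/2⌋} [p;j]·f_{p−2j} of the p-th tensor power of the fundamental object in the Temperley–Lieb category, with [p;j] = C(p,j) − C(p,j−1).) -/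
/-- Multiplicities in the decomposition of `ρ^p` into Jones–Wenzl objects `f_m` in the
Temperley–Lieb category: from the fusion rule `f_m ⊗ ρ ≅ f_{m−1} ⊕ f_{m+1}` (with
`f_{−1} = 0`) the multiplicity `a p m` of `f_m` in `ρ^p` obeys `a 0 0 = 1`,
`a 0 (m+1) = 0`, `a (p+1) 0 = a p 1`, `a (p+1) (m+1) = a p m + a p (m+2)`. -/
def tlMult : ℕ → ℕ → ℕ
  | 0, 0 => 1
  | 0, _ + 1 => 0
  | p + 1, 0 => tlMult p 1
  | p + 1, m + 1 => tlMult p m + tlMult p (m + 2)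

/-- The multiplicity `[p; j] = C(p,j) − C(p,j−1)` of `f_{p−2j}` in `ρ^p`, with
`C(p,j−1)` read as `0` when `j = 0`. -/
def jwMult (p : ℕ) : ℕ → ℕ
  | 0 => 1
  | j + 1 => p.choose (j + 1) - p.choose j

lemma tlMult_of_lt : ∀ p m, p < m → tlMult p m = 0 := by
  intro p
  induction p with
  | zero => intro m h; match m, h with | m+1, _ => rfl
  | succ p ih =>
    intro m h
    match m, h with
    | m+1, h =>
      show tlMult p m + tlMult p (m+2) = 0
      rw [ih m (by omega), ih (m+2) (by omega)]

lemma tlMult_parity : ∀ p m, p % 2 ≠ m % 2 → tlMult p m = 0 := by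
  intro p
  induction p with
  | zero => intro m h; match m with | 0 => omega | m+1 => rfl
  | succ p ih =>
    intro m h
    match m with
    | 0 => show tlMult p 1 = 0; exact ih 1 (by omega)
    | m+1 =>
      show tlMult p m + tlMult p (m+2) = 0
      rw [ih m (by omega), ih (m+2) (by omega)]

lemma choose_mono_half (p j : ℕ) (h : 2*(j+1) ≤ p) : p.choose j ≤ p.choose (j+1) :=
  Nat.choose_le_succ_of_lt_half_left (by omega)

lemma tlMult_main : ∀ p j, 2*j ≤ p → tlMult p (p - 2*j) = jwMult p j := by
  intro p
  induction p with
  | zero => intro j h; have : j = 0 := by omega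
            subst this; rfl
  | succ p ih =>
    intro j h
    rcases Nat.eq_or_lt_of_le h with heq | hlt
    · obtain ⟨k, rfl⟩ : ∃ k, j = k+1 := ⟨j-1, by omega⟩
      have h0 : p + 1 - 2*(k+1) = 0 := by omega
      rw [h0]
      show tlMult p 1 = jwMult (p+1) (k+1)
      have h1 : p - 2*k = 1 := by omega
      have hik := ih k (by omega)
      rw [h1] at hik
      rw [hik]
      match k with
      | 0 =>
        have : p = 1 := by omega
        subst this; decide
      | k+1 =>
        have hp : p = 2*k+3 := by omega
        subst hp
        show (2*k+3).choose (k+1) - (2*k+3).choose k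
            = (2*k+4).choose (k+2) - (2*k+4).choose (k+1)
        have p1 : (2*k+4).choose (k+2) = (2*k+3).choose (k+1) + (2*k+3).choose (k+2) :=
          Nat.choose_succ_succ (2*k+3) (k+1)
        have p2 : (2*k+4).choose (k+1) = (2*k+3).choose k + (2*k+3).choose (k+1) :=
          Nat.choose_succ_succ (2*k+3) k
        have sym : (2*k+3).choose (k+2) = (2*k+3).choose (k+1) := by
          have := Nat.choose_symm (show k+1 ≤ 2*k+3 by omega)
          simpa [show 2*k+3-(k+1)=k+2 from by omega] using this
        have m1 := choose_mono_half (2*k+3) k (by omega)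
        omega
    · have h0 : p + 1 - 2*j = (p - 2*j) + 1 := by omega
      rw [h0]
      show tlMult p (p - 2*j) + tlMult p (p - 2*j + 2) = jwMult (p+1) j
      match j with
      | 0 =>
        simp only [Nat.mul_zero, Nat.sub_zero]
        have h1 : tlMult p p = 1 := by
          have := ih 0 (by omega); simpa [jwMult] using this
        rw [h1, tlMult_of_lt p (p+2) (by omega)]
        rfl
      | k+1 =>
        have h2 : p - 2*(k+1) + 2 = p - 2*k := by omega
        rw [h2, ih (k+1) (by omega)]
        have hik := ih k (by omega)
        rw [hik]
        match k with
        | 0 =>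
          show jwMult p 1 + jwMult p 0 = jwMult (p+1) 1
          have e1 : p.choose 1 = p := Nat.choose_one_right p
          have e2 : (p+1).choose 1 = p+1 := Nat.choose_one_right (p+1)
          simp only [jwMult, e1, e2, Nat.choose_zero_right]
          omega
        | k+1 =>
          have p1 : (p+1).choose (k+1+1) = p.choose (k+1) + p.choose (k+1+1) :=
            Nat.choose_succ_succ p (k+1)
          have p2 : (p+1).choose (k+1) = p.choose k + p.choose (k+1) :=
            Nat.choose_succ_succ p k
          have m1 : p.choose k ≤ p.choose (k+1) := choose_mono_half p k (by omega)
          have m2 : p.choose (k+1) ≤ p.choose (k+1+1) := choose_mono_half p (k+1) (by omega)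
          simp only [jwMult]
          omega


/-- **Multiplicities in `ρ^p = ⊕_{j=0}^{⌊p/2⌋} [p;j]·f_{p−2j}`**: for all `p` and all `j`
with `2j ≤ p` one has `a(p, p−2j) = C(p,j) − C(p,j−1)` (with `C(p,j−1)` read as `0` when
`j = 0`); moreover `a(p,m) = 0` whenever `m > p` or `p − m` is odd. -/
theorem tlMult_eq_choose_sub_choose :
    (∀ p j : ℕ, 2 * j ≤ p → tlMult p (p - 2 * j) = jwMult p j) ∧
    (∀ p m : ℕ, (p < m ∨ Odd (p - m)) → tlMult p m = 0) := by
  refine ⟨tlMult_main, ?_⟩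
  intro p m h
  rcases h with h | h
  · exact tlMult_of_lt p m h
  · rcases Nat.lt_or_ge p m with h2 | h2
    · exact tlMult_of_lt p m h2
    · apply tlMult_parity
      rcases h with ⟨t, ht⟩
      omega
end

section
/- For every p ∈ ℕ, Σ_{j=0}^{⌊p/2⌋} (C(p,j) − C(p,j−1))² = catalan(p), where C denotes the binomial coefficient, C(p,j−1) is read as 0 when j = 0, and catalan(p) = C(2p,p)/(p+1) is the p-th Catalan number. (Since the multiplicity of the Jones–Wenzl object f_{p−2j} in ρ^p is C(p,j) − C(p,j−1) and dim Hom(ρ^p, ρ^p) is the Catalan number catalan(p), this identity is the dimension count by which the paper deduces that each new Jones–Wenzl object f_{p} is simple, i.e. ⟨f_p, f_p⟩ = 1.) -/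
open Finset

/-- Folding a sum over `range n` of a function symmetric under `j ↦ n - 1 - j`. -/
lemma half_sum_aux (n : ℕ) (g : ℕ → ℤ) (hg : ∀ j < n, g j = g (n - 1 - j)) :
    ∑ j ∈ range n, g j = ∑ j ∈ range (n / 2), g j + ∑ j ∈ range ((n + 1) / 2), g j := by
  have h1 : ∑ j ∈ range n, g j
      = ∑ j ∈ range (n / 2), g j + ∑ j ∈ Ico (n / 2) n, g j := by
    rw [range_eq_Ico, ← sum_Ico_consecutive _ (Nat.zero_le _) (Nat.div_le_self n 2),
      ← range_eq_Ico]
  rw [h1]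
  congr 1
  rw [sum_Ico_eq_sum_range]
  have hlen : n - n / 2 = (n + 1) / 2 := by omega
  rw [hlen]
  calc ∑ i ∈ range ((n + 1) / 2), g (n / 2 + i)
      = ∑ i ∈ range ((n + 1) / 2), g ((n + 1) / 2 - 1 - i) := by
        refine sum_congr rfl fun i hi => ?_
        simp only [mem_range] at hi
        rw [hg (n / 2 + i) (by omega)]
        congr 1
        omega
    _ = ∑ i ∈ range ((n + 1) / 2), g i := Finset.sum_range_reflect g _

/-- Vandermonde: `C(2p,p) = Σ_{j=0}^{p} C(p,j)²`. -/
lemma centralBinom_eq_sum_sq (p : ℕ) :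
    (((2 * p).choose p : ℕ) : ℤ) = ∑ j ∈ range (p + 1), ((p.choose j : ℤ)) ^ 2 := by
  have h := Nat.add_choose_eq p p p
  rw [Nat.sum_antidiagonal_eq_sum_range_succ (fun i j => p.choose i * p.choose j) p] at h
  rw [two_mul, h]
  push_cast
  refine sum_congr rfl fun j hj => ?_
  simp only [mem_range] at hj
  rw [Nat.choose_symm (by omega : j ≤ p)]
  ring

/-- Vandermonde: `C(2p,p+1) = Σ_{j=0}^{p-1} C(p,j+1)·C(p,j)`. -/
lemma choose_succ_eq_sum_mul (p : ℕ) :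
    (((2 * p).choose (p + 1) : ℕ) : ℤ)
      = ∑ j ∈ range p, ((p.choose (j + 1) : ℤ)) * (p.choose j : ℤ) := by
  have h := Nat.add_choose_eq p p (p + 1)
  rw [Nat.sum_antidiagonal_eq_sum_range_succ (fun i j => p.choose i * p.choose j) (p + 1)] at h
  rw [Finset.sum_range_succ', Finset.sum_range_succ] at h
  simp only [Nat.choose_succ_self, Nat.mul_zero, Nat.zero_mul, Nat.add_zero, Nat.zero_add,
    Nat.succ_sub_succ] at h
  rw [two_mul, h]
  push_cast
  simp only [Nat.choose_succ_self, Nat.cast_zero, mul_zero, add_zero, Nat.sub_zero]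
  refine sum_congr rfl fun j hj => ?_
  simp only [mem_range] at hj
  rw [Nat.choose_symm (by omega : j ≤ p)]

/-- The key identity in `ℤ`. -/
lemma key_int (p : ℕ) :
    ∑ j ∈ range (p / 2 + 1), ((jwMult p j : ℕ) : ℤ) ^ 2
      = ((2 * p).choose p : ℤ) - ((2 * p).choose (p + 1) : ℤ) := by
  set m := p / 2 with hm
  set m' := (p + 1) / 2 with hm'
  set c : ℕ → ℤ := fun j => (p.choose j : ℤ) with hc
  -- rewrite LHS
  have hL : ∑ j ∈ range (m + 1), ((jwMult p j : ℕ) : ℤ) ^ 2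
      = 1 + ∑ j ∈ range m, (c (j + 1) - c j) ^ 2 := by
    rw [Finset.sum_range_succ']
    have h0 : ((jwMult p 0 : ℕ) : ℤ) ^ 2 = 1 := by simp [jwMult]
    rw [h0, add_comm]
    congr 1
    refine sum_congr rfl fun j hj => ?_
    simp only [mem_range] at hj
    have hmono : p.choose j ≤ p.choose (j + 1) :=
      Nat.choose_le_succ_of_lt_half_left (by omega)
    show ((p.choose (j + 1) - p.choose j : ℕ) : ℤ) ^ 2 = _
    rw [Nat.cast_sub hmono]
  -- fold the two Vandermonde sums
  have hF : ((2 * p).choose p : ℤ)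
      = ∑ j ∈ range m', (c j) ^ 2 + ∑ j ∈ range (m + 1), (c j) ^ 2 := by
    have hsym : ∀ j < p + 1, (c j) ^ 2 = (c (p + 1 - 1 - j)) ^ 2 := by
      intro j hj
      have h1 : p + 1 - 1 - j = p - j := by omega
      simp only [hc, h1]
      rw [Nat.choose_symm (by omega : j ≤ p)]
    rw [centralBinom_eq_sum_sq p, half_sum_aux (p + 1) _ hsym]
    have e1 : (p + 1) / 2 = m' := by omega
    have e2 : (p + 1 + 1) / 2 = m + 1 := by omega
    rw [e1, e2]
  have hG : ((2 * p).choose (p + 1) : ℤ)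
      = ∑ j ∈ range m, c (j + 1) * c j + ∑ j ∈ range m', c (j + 1) * c j := by
    have hsym : ∀ j < p, c (j + 1) * c j = c (p - 1 - j + 1) * c (p - 1 - j) := by
      intro j hj
      simp only [hc]
      have h1 : p - 1 - j + 1 = p - j := by omega
      have h2 : p - 1 - j = p - (j + 1) := by omega
      rw [h1, h2, Nat.choose_symm (by omega : j ≤ p),
        Nat.choose_symm (by omega : j + 1 ≤ p)]
      ring
    rw [choose_succ_eq_sum_mul p, half_sum_aux p _ hsym]
  -- expand the square
  have hexp : ∑ j ∈ range m, (c (j + 1) - c j) ^ 2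
      = ∑ j ∈ range m, (c (j + 1)) ^ 2 + ∑ j ∈ range m, (c j) ^ 2
        - 2 * ∑ j ∈ range m, c (j + 1) * c j := by
    rw [Finset.mul_sum, ← Finset.sum_add_distrib, ← Finset.sum_sub_distrib]
    refine sum_congr rfl fun j _ => by ring
  have hshift : ∑ j ∈ range m, (c (j + 1)) ^ 2
      = ∑ j ∈ range (m + 1), (c j) ^ 2 - 1 := by
    rw [Finset.sum_range_succ']
    simp [hc]
  -- parity correction: B + X'' = B'' + X
  have hpar : ∑ j ∈ range m, (c j) ^ 2 + ∑ j ∈ range m', c (j + 1) * c j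
      = ∑ j ∈ range m', (c j) ^ 2 + ∑ j ∈ range m, c (j + 1) * c j := by
    rcases Nat.even_or_odd p with hp | hp
    · obtain ⟨k, hk⟩ := hp
      have : m' = m := by omega
      rw [this]
    · obtain ⟨k, hk⟩ := hp
      have hmk : m = k := by omega
      have hm'k : m' = k + 1 := by omega
      rw [hmk, hm'k, Finset.sum_range_succ, Finset.sum_range_succ]
      have : c (k + 1) = c k := by
        simp only [hc, hk]
        exact_mod_cast congrArg (Nat.cast : ℕ → ℤ) (Nat.choose_symm_half k)
      rw [this]; ring
  rw [hL, hexp, hshift, hF, hG]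
  linarith [hpar]

/-- **Catalan dimension count for simplicity of the Jones–Wenzl objects**: since
`ρ^p = ⊕_{j=0}^{⌊p/2⌋} (C(p,j) − C(p,j−1))·f_{p−2j}` and
`dim Hom(ρ^p, ρ^p) = catalan p`, the multiplicities satisfy
`Σ_{j=0}^{⌊p/2⌋} (C(p,j) − C(p,j−1))² = catalan p`. -/
theorem sum_sq_jwMult_eq_catalan (p : ℕ) :
    ∑ j ∈ Finset.range (p / 2 + 1), (jwMult p j) ^ 2 = catalan p := by
  have hkey := key_int p
  have hcat : ((p : ℤ) + 1) * catalan p = (2 * p).choose p := by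
    have := succ_mul_catalan_eq_centralBinom p
    rw [Nat.centralBinom] at this
    exact_mod_cast congrArg (Nat.cast : ℕ → ℤ) this
  have hright : ((2 * p).choose (p + 1) : ℤ) * ((p : ℤ) + 1)
      = ((2 * p).choose p : ℤ) * p := by
    have h := Nat.choose_succ_right_eq (2 * p) p
    have h2 : 2 * p - p = p := by omega
    rw [h2] at h
    exact_mod_cast congrArg (Nat.cast : ℕ → ℤ) h
  have hS : ((∑ j ∈ Finset.range (p / 2 + 1), (jwMult p j) ^ 2 : ℕ) : ℤ)
      = ∑ j ∈ range (p / 2 + 1), ((jwMult p j : ℕ) : ℤ) ^ 2 := by push_cast; rfl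
  have hmul : ((p : ℤ) + 1) * ((∑ j ∈ Finset.range (p / 2 + 1), (jwMult p j) ^ 2 : ℕ) : ℤ)
      = ((p : ℤ) + 1) * (catalan p : ℤ) := by
    rw [hS, hkey, hcat]
    linarith [hright]
  have hp1 : ((p : ℤ) + 1) ≠ 0 := by positivity
  have := mul_left_cancel₀ hp1 hmul
  exact_mod_cast this
end
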